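/- arXiv:1809.06599 — 3 statements merged into one kernel-verified Lean document; each statement's English description precedes it below -/
import Mathlib

section
/- There exists an absolute constant c > 0 such that for every family (B_n)_{n ∈ ℤ∖{0}} of nonnegative real numbers with Σ_{n∈ℤ∖{0}} B_n < ∞, one has ∫₀¹ (1 + Σ_{n∈ℤ∖{0}} B_n sin²(πnt)) · exp(−Σ_{n∈ℤ∖{0}} B_n sin²(πnt)) dt ≤ c/√(1 + Σ_{n∈ℤ∖{0}} B_n). -/
/-!
Write `S t = ∑ Bₙ sin²(πnt)` and `M = ∑ Bₙ`. If `M ≤ 1` the integrand is at most `1`.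
Otherwise `(1 + S) e^{-S} ≤ 2 e^{-S/2}`, and Jensen's inequality for the probability weights
`Bₙ / M` gives `e^{-S/2} ≤ ∑ (Bₙ / M) e^{-(M/2) sin²(πnt)}`. By periodicity every term integrates
to `∫₀¹ e^{-(M/2) sin²(πt)} dt`, and `sin(πt) ≥ 2 min(t, 1 - t)` bounds this by a Gaussian
integral of size `√(π / (2M))`.
-/

open Real MeasureTheory Function

theorem add_one_mul_exp_neg_le_one (x : ℝ) : (1 + x) * exp (-x) ≤ 1 := by
  calc (1 + x) * exp (-x) ≤ exp x * exp (-x) := by gcongr; linarith [add_one_le_exp x]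
    _ = 1 := by rw [← exp_add, add_neg_cancel, exp_zero]

theorem add_one_mul_exp_neg_le_two_mul_exp_neg_half (x : ℝ) :
    (1 + x) * exp (-x) ≤ 2 * exp (-(x / 2)) := by
  calc (1 + x) * exp (-x) ≤ 2 * exp (x / 2) * exp (-x) := by
        gcongr; linarith [add_one_le_exp (x / 2)]
    _ = 2 * exp (-(x / 2)) := by rw [mul_assoc, ← exp_add]; ring_nf

theorem exp_neg_tsum_le_tsum_mul_exp_neg {ι : Type*} {w y : ι → ℝ} (hw : ∀ i, 0 ≤ w i)
    (hw1 : HasSum w 1) (hwy : Summable fun i => w i * y i)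
    (hwe : Summable fun i => w i * exp (-y i)) :
    exp (-∑' i, w i * y i) ≤ ∑' i, w i * exp (-y i) := by
  set m := ∑' i, w i * y i
  -- the tangent line of `x ↦ exp (-x)` at `m` lies below its graph
  have tangent (i : ι) : exp (-m) * (w i - (w i * y i - w i * m)) ≤ w i * exp (-y i) := by
    have h := add_one_le_exp (m - y i)
    calc exp (-m) * (w i - (w i * y i - w i * m)) = w i * (exp (-m) * (m - y i + 1)) := by ring
      _ ≤ w i * (exp (-m) * exp (m - y i)) := by gcongr; exact hw i
      _ = w i * exp (-y i) := by rw [← exp_add]; ring_nf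
  have hsum : HasSum (fun i => exp (-m) * (w i - (w i * y i - w i * m))) (exp (-m)) := by
    have hm : HasSum (fun i => w i * y i) m := hwy.hasSum
    simpa using (hw1.sub (hm.sub (hw1.mul_right m))).mul_left (exp (-m))
  exact hasSum_le tangent hsum hwe.hasSum

theorem one_add_tsum_mul_exp_neg_tsum_le {ι : Type*} {b s : ι → ℝ} {M : ℝ}
    (hb : ∀ i, 0 ≤ b i) (hbM : HasSum b M) (hM : 0 < M) (hs0 : ∀ i, 0 ≤ s i) (hs1 : ∀ i, s i ≤ 1) :
    (1 + ∑' i, b i * s i) * exp (-∑' i, b i * s i) ≤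
      2 * ∑' i, b i / M * exp (-(M / 2 * s i)) := by
  have hbs : Summable fun i => b i * s i :=
    .of_nonneg_of_le (fun i => mul_nonneg (hb i) (hs0 i))
      (fun i => mul_le_of_le_one_right (hb i) (hs1 i)) hbM.summable
  have hw1 : HasSum (fun i => b i / M) 1 := by simpa [hM.ne'] using hbM.div_const M
  have hwy_eq : (fun i => b i / M * (M / 2 * s i)) = fun i => b i * s i / 2 := by
    ext i; field_simp
  have hwe : Summable fun i => b i / M * exp (-(M / 2 * s i)) := by
    refine .of_nonneg_of_le (fun i => mul_nonneg (div_nonneg (hb i) hM.le) (exp_nonneg _))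
      (fun i => ?_) hw1.summable
    refine mul_le_of_le_one_right (div_nonneg (hb i) hM.le) (exp_le_one_iff.2 ?_)
    nlinarith [hs0 i]
  calc (1 + ∑' i, b i * s i) * exp (-∑' i, b i * s i)
      ≤ 2 * exp (-((∑' i, b i * s i) / 2)) := add_one_mul_exp_neg_le_two_mul_exp_neg_half _
    _ = 2 * exp (-∑' i, b i / M * (M / 2 * s i)) := by rw [hwy_eq, tsum_div_const]
    _ ≤ 2 * ∑' i, b i / M * exp (-(M / 2 * s i)) := by
        gcongr
        refine exp_neg_tsum_le_tsum_mul_exp_neg (fun i => div_nonneg (hb i) hM.le) hw1 ?_ hwe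
        simpa only [hwy_eq] using hbs.div_const 2

theorem Function.Periodic.intervalIntegral_comp_int_mul {g : ℝ → ℝ} {T : ℝ} (hg : Periodic g T)
    (hgi : ∀ a b, IntervalIntegrable g volume a b) {n : ℤ} (hn : n ≠ 0) :
    ∫ t in 0..T, g (n * t) = ∫ t in 0..T, g t := by
  have hT := hg.intervalIntegral_add_zsmul_eq n 0 hgi
  rw [zero_add, zero_add, zsmul_eq_mul] at hT
  rw [intervalIntegral.integral_comp_mul_left g (Int.cast_ne_zero.2 hn), mul_zero, hT,
    zsmul_eq_mul, smul_eq_mul, ← mul_assoc, inv_mul_cancel₀ (Int.cast_ne_zero.2 hn), one_mul]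

theorem Function.Periodic.intervalIntegral_tsum_mul_comp_int_mul {ι : Type*} [Countable ι]
    {g : ℝ → ℝ} {T : ℝ} (hg : Periodic g T) (hT : T ≠ 0) (hgc : Continuous g) {w : ι → ℝ}
    (hw : Summable w) {k : ι → ℤ} (hk : ∀ i, k i ≠ 0) :
    ∫ t in 0..T, ∑' i, w i * g (k i * t) = (∑' i, w i) * ∫ t in 0..T, g t := by
  obtain ⟨C, hC⟩ := isBounded_iff_forall_norm_le.1 (hg.isBounded_of_continuous hT hgc)
  have hbound (i : ι) (t : ℝ) : ‖w i * g (k i * t)‖ ≤ ‖w i‖ * C := by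
    rw [norm_mul]; gcongr; exact hC _ ⟨_, rfl⟩
  have hsum := intervalIntegral.hasSum_integral_of_dominated_convergence (μ := volume)
    (F := fun i t => w i * g (k i * t)) (a := 0) (b := T) (fun i _ => ‖w i‖ * C)
    (fun i => (by fun_prop : Continuous fun t => w i * g (k i * t)).aestronglyMeasurable)
    (fun i => .of_forall fun t _ => hbound i t)
    (.of_forall fun _ _ => hw.norm.mul_right C) intervalIntegrable_const
    (.of_forall fun t _ => (Summable.of_norm_bounded (hw.norm.mul_right C) (hbound · t)).hasSum)
  rw [← hsum.tsum_eq]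
  simp only [intervalIntegral.integral_const_mul,
    hg.intervalIntegral_comp_int_mul hgc.intervalIntegrable (hk _), tsum_mul_right]

theorem two_mul_le_sin_pi_mul {t : ℝ} (h0 : 0 ≤ t) (h1 : t ≤ 1 / 2) : 2 * t ≤ sin (π * t) :=
  calc 2 * t = 2 / π * (π * t) := by field_simp
    _ ≤ sin (π * t) := mul_le_sin (by positivity) (by nlinarith [pi_pos])

theorem exp_neg_mul_sin_pi_mul_sq_le_of_le_half {a t : ℝ} (ha : 0 ≤ a) (h0 : 0 ≤ t)
    (h1 : t ≤ 1 / 2) : exp (-(a * sin (π * t) ^ 2)) ≤ exp (-(4 * a) * t ^ 2) := by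
  have h := two_mul_le_sin_pi_mul h0 h1
  have : 4 * t ^ 2 ≤ sin (π * t) ^ 2 := by nlinarith
  gcongr exp ?_
  nlinarith

theorem exp_neg_mul_sin_pi_mul_sq_le {a t : ℝ} (ha : 0 ≤ a) (ht : t ∈ Set.Icc (0 : ℝ) 1) :
    exp (-(a * sin (π * t) ^ 2)) ≤ exp (-(4 * a) * t ^ 2) + exp (-(4 * a) * (1 - t) ^ 2) := by
  obtain ⟨h0, h1⟩ := ht
  rcases le_total t (1 / 2) with h | h
  · linarith [exp_neg_mul_sin_pi_mul_sq_le_of_le_half ha h0 h, exp_pos (-(4 * a) * (1 - t) ^ 2)]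
  · have hsym : sin (π * t) = sin (π * (1 - t)) := by rw [mul_one_sub, sin_pi_sub]
    have := exp_neg_mul_sin_pi_mul_sq_le_of_le_half ha (sub_nonneg.2 h1) (by linarith)
    rw [hsym]
    linarith [exp_pos (-(4 * a) * t ^ 2)]

theorem integral_exp_neg_mul_sin_pi_mul_sq_le {a : ℝ} (ha : 0 < a) :
    ∫ t in 0..1, exp (-(a * sin (π * t) ^ 2)) ≤ √(π / (4 * a)) := by
  set f := fun x : ℝ => exp (-(4 * a) * x ^ 2)
  have hf : Continuous f := by fun_prop
  have hgauss : ∫ t in 0..1, f t ≤ √(π / (4 * a)) / 2 := by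
    rw [intervalIntegral.integral_of_le zero_le_one, ← integral_gaussian_Ioi]
    exact setIntegral_mono_set (integrable_exp_neg_mul_sq (by positivity)).integrableOn
      (.of_forall fun x => (exp_pos _).le) Set.Ioc_subset_Ioi_self.eventuallyLE
  calc ∫ t in 0..1, exp (-(a * sin (π * t) ^ 2))
      ≤ ∫ t in 0..1, (f t + f (1 - t)) :=
        intervalIntegral.integral_mono_on zero_le_one
          ((by fun_prop : Continuous fun t => exp (-(a * sin (π * t) ^ 2))).intervalIntegrable _ _)
          ((by fun_prop : Continuous fun t => f t + f (1 - t)).intervalIntegrable _ _)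
          fun t ht => exp_neg_mul_sin_pi_mul_sq_le ha.le ht
    _ = 2 * ∫ t in 0..1, f t := by
        have hf' : Continuous fun t => f (1 - t) := by fun_prop
        rw [intervalIntegral.integral_add (hf.intervalIntegrable _ _) (hf'.intervalIntegrable _ _),
          intervalIntegral.integral_comp_sub_left f]
        norm_num; ring
    _ ≤ √(π / (4 * a)) := by linarith

theorem continuous_tsum_mul_sin_sq {ι : Type*} {b ω : ι → ℝ} (hb : ∀ i, 0 ≤ b i)
    (hbs : Summable b) : Continuous fun t => ∑' i, b i * sin (ω i * t) ^ 2 :=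
  continuous_tsum (fun i => by fun_prop) hbs fun i t => by
    rw [norm_mul, norm_of_nonneg (hb i), norm_pow, norm_eq_abs, sq_abs]
    exact mul_le_of_le_one_right (hb i) (sin_sq_le_one _)

theorem integral_one_add_mul_exp_neg_le_one {S : ℝ → ℝ} (hS : Continuous S) :
    ∫ t in 0..1, (1 + S t) * exp (-S t) ≤ 1 :=
  calc ∫ t in 0..1, (1 + S t) * exp (-S t) ≤ ∫ t in (0 : ℝ)..1, (1 : ℝ) :=
        intervalIntegral.integral_mono_on zero_le_one
          ((by fun_prop : Continuous _).intervalIntegrable _ _) intervalIntegrable_const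
          fun t _ => add_one_mul_exp_neg_le_one _
    _ = 1 := by simp

theorem integral_one_add_tsum_mul_exp_neg_tsum_le {ι : Type*} [Countable ι] {b : ι → ℝ}
    {k : ι → ℤ} {M : ℝ} (hb : ∀ i, 0 ≤ b i) (hbM : HasSum b M) (hM : 0 < M)
    (hk : ∀ i, k i ≠ 0) :
    ∫ t in 0..1, (1 + ∑' i, b i * sin (π * k i * t) ^ 2) * exp (-∑' i, b i * sin (π * k i * t) ^ 2)
      ≤ 2 * √(π / (2 * M)) := by
  set g : ℝ → ℝ := fun t => exp (-(M / 2 * sin (π * t) ^ 2))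
  have hg : Continuous g := by fun_prop
  have hgper : Periodic g 1 := fun t => by simp only [g, mul_add, mul_one, sin_add_pi, neg_sq]
  have hS := continuous_tsum_mul_sin_sq (ω := fun i => π * k i) hb hbM.summable
  have hG : Continuous fun t => 2 * ∑' i, b i / M * g (k i * t) := by
    refine continuous_const.mul (continuous_tsum (fun i => by fun_prop) (hbM.summable.div_const M)
      fun i t => ?_)
    rw [norm_mul, norm_of_nonneg (div_nonneg (hb i) hM.le), norm_of_nonneg (exp_pos _).le]
    refine mul_le_of_le_one_right (div_nonneg (hb i) hM.le) (exp_le_one_iff.2 ?_)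
    nlinarith [sq_nonneg (sin (π * (k i * t)))]
  calc ∫ t in 0..1, (1 + ∑' i, b i * sin (π * k i * t) ^ 2) *
        exp (-∑' i, b i * sin (π * k i * t) ^ 2)
      ≤ ∫ t in 0..1, 2 * ∑' i, b i / M * g (k i * t) :=
        intervalIntegral.integral_mono_on zero_le_one
          ((by fun_prop : Continuous _).intervalIntegrable _ _) (hG.intervalIntegrable _ _)
          fun t _ => by
            simpa only [g, mul_assoc] using one_add_tsum_mul_exp_neg_tsum_le hb hbM hM
              (fun i => sq_nonneg (sin (π * (k i * t)))) (fun i => sin_sq_le_one _)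
    _ = 2 * ∫ t in 0..1, g t := by
        rw [intervalIntegral.integral_const_mul,
          hgper.intervalIntegral_tsum_mul_comp_int_mul one_ne_zero hg (hbM.summable.div_const M)
            hk, tsum_div_const, hbM.tsum_eq, div_self hM.ne', one_mul]
    _ ≤ 2 * √(π / (2 * M)) := by
        rw [show 2 * M = 4 * (M / 2) by ring]
        gcongr
        exact integral_exp_neg_mul_sin_pi_mul_sq_le (by positivity)

/-- There exists an absolute constant `c > 0` such that for every family `(B n)_{n ∈ ℤ \ {0}}`
of nonnegative reals with `∑_{n ≠ 0} B n < ∞`,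
`∫₀¹ (1 + ∑_{n≠0} B n · sin²(πnt)) · exp(−∑_{n≠0} B n · sin²(πnt)) dt
  ≤ c / √(1 + ∑_{n≠0} B n)`. -/
theorem statement1 :
    ∃ c : ℝ, 0 < c ∧ ∀ B : ℤ → ℝ,
      (∀ n : ℤ, n ≠ 0 → 0 ≤ B n) →
      Summable (fun n : {n : ℤ // n ≠ 0} => B n.val) →
      (∫ t in (0:ℝ)..1,
        (1 + ∑' n : {n : ℤ // n ≠ 0}, B n.val * Real.sin (Real.pi * n.val * t) ^ 2) *
          Real.exp (-(∑' n : {n : ℤ // n ≠ 0}, B n.val * Real.sin (Real.pi * n.val * t) ^ 2))) ≤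
        c / Real.sqrt (1 + ∑' n : {n : ℤ // n ≠ 0}, B n.val) := by
  refine ⟨4, by norm_num, fun B hB hsum => ?_⟩
  set M := ∑' n : {n : ℤ // n ≠ 0}, B n.val
  have hB' (n : {n : ℤ // n ≠ 0}) : 0 ≤ B n := hB n n.prop
  have hM : 0 ≤ M := tsum_nonneg hB'
  have hsqrt : 0 < √(1 + M) := by positivity
  rcases le_or_gt M 1 with hM1 | hM1
  · calc _ ≤ 1 := integral_one_add_mul_exp_neg_le_one (continuous_tsum_mul_sin_sq hB' hsum)
      _ ≤ 4 / √(1 + M) := by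
          rw [le_div_iff₀ hsqrt, one_mul]
          nlinarith [sq_sqrt (by positivity : (0 : ℝ) ≤ 1 + M)]
  · calc _ ≤ 2 * √(π / (2 * M)) :=
          integral_one_add_tsum_mul_exp_neg_tsum_le hB' hsum.hasSum (by linarith) Subtype.prop
      _ ≤ 4 / √(1 + M) := by
          rw [le_div_iff₀ hsqrt, mul_assoc, ← sqrt_mul (by positivity)]
          calc 2 * √(π / (2 * M) * (1 + M)) ≤ 2 * √(2 ^ 2) := by
                gcongr
                rw [div_mul_eq_mul_div, div_le_iff₀ (by positivity)]
                nlinarith [pi_le_four]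
            _ = 4 := by rw [sqrt_sq zero_le_two]; norm_num
end

section
/- Fix integers r, g ≥ 1. There exist constants K, C > 0 depending only on r and g such that: for every multiplicative function ρ : ℕ → ℝ≥0 satisfying, for all primes p and all integers ν ≥ 1, ρ(p) ≤ p − 1 and ρ(p^ν) ≤ min(g·p^{ν − ν/g}, p^{ν−1}·ρ(p)), and for every positive integer N, one has Σ_{T ≥ 1, rad(T) | N} ρ(T)·τ_r(T)/T ≤ C · (N/φ_ρ(N))^K, where φ_ρ(N) := N·∏_{p | N} (1 − ρ(p)/p). -/
/-!
Since `τ_r(T) ≤ d(T)^(r-1)`, each summand is dominated by the multiplicative function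
`f(T) = ρ(T) d(T)^(r-1) / T`, and since every `T` in the sum divides a power of `N`, the sum is at
most the Euler product `∏_{p ∣ N} ∑_ν f(p^ν)`. In the factor at `p`, put `x = ρ(p)/p`. The bound
`ρ(p^ν) ≤ p^(ν-1) ρ(p)` makes the terms `1 ≤ ν ≤ 4g` contribute at most `K x ≤ (1-x)^(-K) - 1`
with `K = (4g+1)^r`, and the bound `ρ(p^ν) ≤ g p^(ν-ν/g)` makes the terms `ν > 4g` contribute
`O(p⁻²)`. Over all `p`, the `O(p⁻²)` parts multiply to a bounded constant and the rest to
`(N / φ_ρ(N))^K`.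
-/

open scoped Classical

/-- The `r`-fold divisor function: the number of ordered `r`-tuples `(d₁, …, d_r)` of positive
integers with `d₁⋯d_r = T`. -/
noncomputable def taur (r T : ℕ) : ℕ :=
  ((Fintype.piFinset fun _ : Fin r => Finset.Icc 1 T).filter fun d => ∏ i, d i = T).card

/-- `φ_ρ(N) := N · ∏_{p ∣ N} (1 − ρ(p)/p)`. -/
noncomputable def phiRho (ρ : ℕ → ℝ) (N : ℕ) : ℝ :=
  N * ∏ p ∈ N.primeFactors, (1 - ρ p / p)

open Finset

lemma Nat.sum_divisors_eq_prod_primeFactors_sum_range {R : Type*} [CommSemiring R] (f : ℕ → R)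
    (h_mult : ∀ m n, m.Coprime n → f (m * n) = f m * f n) (hf1 : f 1 = 1) {n : ℕ} (hn : n ≠ 0) :
    ∑ d ∈ n.divisors, f d =
      ∏ p ∈ n.primeFactors, ∑ i ∈ range (n.factorization p + 1), f (p ^ i) := by
  have h_sum_mult : ∀ m n : ℕ, m.Coprime n →
      ∑ d ∈ (m * n).divisors, f d = (∑ d ∈ m.divisors, f d) * ∑ d ∈ n.divisors, f d := by
    intro m n hmn
    rw [hmn.divisors_mul, sum_map]
    refine (sum_attach (m.divisors ×ˢ n.divisors) fun d => f (d.1 * d.2)).trans ?_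
    rw [sum_product, sum_mul_sum]
    refine sum_congr rfl fun a ha => sum_congr rfl fun b hb => h_mult a b ?_
    exact (hmn.coprime_dvd_left (Nat.dvd_of_mem_divisors ha)).coprime_dvd_right
      (Nat.dvd_of_mem_divisors hb)
  rw [Nat.multiplicative_factorization (fun n => ∑ d ∈ n.divisors, f d) h_sum_mult
      (by simp [hf1]) hn,
    Nat.prod_factorization_eq_prod_primeFactors]
  exact prod_congr rfl fun p hp => Nat.sum_divisors_prime_pow (Nat.prime_of_mem_primeFactors hp)

lemma exists_sum_le_prod_primeFactors_sum_range (f : ℕ → ℝ) (hf0 : ∀ n, 0 ≤ f n)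
    (h_mult : ∀ m n, m.Coprime n → f (m * n) = f m * f n) (hf1 : f 1 = 1) {N : ℕ} (hN : N ≠ 0)
    (S : Finset ℕ) (hS : ∀ T ∈ S, T ≠ 0 ∧ T.primeFactors ⊆ N.primeFactors) :
    ∃ len : ℕ → ℕ, ∑ T ∈ S, f T ≤ ∏ p ∈ N.primeFactors, ∑ i ∈ range (len p), f (p ^ i) := by
  set M := N ^ (S.sup id + 1)
  have hM : M ≠ 0 := pow_ne_zero _ hN
  have hSM : S ⊆ M.divisors := fun T hT => by
    obtain ⟨hT0, hTN⟩ := hS T hT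
    refine Nat.mem_divisors.2 ⟨?_, hM⟩
    calc T ∣ N ^ T := (Nat.dvd_pow_self_iff hT0 hN).2 hTN
      _ ∣ M := pow_dvd_pow N ((le_sup (f := id) hT).trans (Nat.le_succ _))
  refine ⟨fun p => M.factorization p + 1, ?_⟩
  calc ∑ T ∈ S, f T ≤ ∑ d ∈ M.divisors, f d := sum_le_sum_of_subset_of_nonneg hSM fun _ _ _ => hf0 _
    _ = _ := by
      rw [Nat.sum_divisors_eq_prod_primeFactors_sum_range f h_mult hf1 hM,
        Nat.primeFactors_pow _ (Nat.succ_ne_zero _)]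

noncomputable def decayRatio (g : ℕ) : ℝ := 2 ^ (-(2 * g : ℝ)⁻¹)

noncomputable def tailConst (g k : ℕ) : ℝ := ∑' ν : ℕ, ((ν : ℝ) + 1) ^ k * decayRatio g ^ ν

lemma decayRatio_pos (g : ℕ) : 0 < decayRatio g := Real.rpow_pos_of_pos zero_lt_two _

lemma decayRatio_pow (g ν : ℕ) : decayRatio g ^ ν = 2 ^ (-(ν / (2 * g) : ℝ)) := by
  rw [decayRatio, ← Real.rpow_mul_natCast zero_le_two]
  ring_nf

lemma summable_tailConst {g : ℕ} (hg : 0 < g) (k : ℕ) :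
    Summable fun ν : ℕ => ((ν : ℝ) + 1) ^ k * decayRatio g ^ ν := by
  have hq0 := decayRatio_pos g
  have hq1 : decayRatio g < 1 :=
    Real.rpow_lt_one_of_one_lt_of_neg one_lt_two (by simp; positivity)
  have hq : ‖decayRatio g‖ < 1 := by rwa [Real.norm_of_nonneg hq0.le]
  have h : Summable fun ν : ℕ => ((ν + 1 : ℕ) : ℝ) ^ k * decayRatio g ^ (ν + 1) :=
    (summable_nat_add_iff (f := fun n : ℕ => (n : ℝ) ^ k * decayRatio g ^ n) 1).2
      (summable_pow_mul_geometric_of_norm_lt_one k hq)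
  refine (h.mul_left (decayRatio g)⁻¹).congr fun ν => ?_
  simp only [Nat.cast_add, Nat.cast_one, pow_succ]
  field_simp

lemma sum_le_tailConst {g : ℕ} (hg : 0 < g) (k : ℕ) (s : Finset ℕ) :
    ∑ ν ∈ s, ((ν : ℝ) + 1) ^ k * decayRatio g ^ ν ≤ tailConst g k :=
  (summable_tailConst hg k).sum_le_tsum s fun ν _ => by have := decayRatio_pos g; positivity

lemma tailConst_nonneg (g k : ℕ) : 0 ≤ tailConst g k :=
  tsum_nonneg fun ν => by have := decayRatio_pos g; positivity

/-- Half of the decay `p^(-ν/g)` pays for the factor `p⁻²`, the other half for convergence. -/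
lemma rpow_neg_div_le {g ν : ℕ} (hg : 0 < g) (hν : 4 * g ≤ ν) {p : ℝ} (hp : 2 ≤ p) :
    p ^ (-(ν / g : ℝ)) ≤ decayRatio g ^ ν / p ^ 2 := by
  have hp0 : 0 < p := by linarith
  have hgR : (0 : ℝ) < g := Nat.cast_pos.2 hg
  set t : ℝ := ν / (2 * g)
  have ht : 2 ≤ t := by
    rw [le_div_iff₀ (by positivity)]
    exact_mod_cast (by omega : 2 * (2 * g) ≤ ν)
  have hsplit : p ^ (-(ν / g : ℝ)) = p ^ (-t) * p ^ (-t) := by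
    rw [← Real.rpow_add hp0, show -t + -t = -(ν / g : ℝ) by simp only [t]; field_simp; ring]
  have h_sq : p ^ (-t) ≤ (p ^ 2)⁻¹ := by
    rw [← Real.rpow_two, ← Real.rpow_neg hp0.le]
    exact Real.rpow_le_rpow_of_exponent_le (by linarith) (by linarith)
  have h_ratio : p ^ (-t) ≤ decayRatio g ^ ν := by
    rw [decayRatio_pow]
    exact Real.rpow_le_rpow_of_nonpos zero_lt_two hp (by simp; positivity)
  rw [hsplit, div_eq_mul_inv, mul_comm (decayRatio g ^ ν)]
  exact mul_le_mul h_sq h_ratio (by positivity) (by positivity)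

lemma one_add_mul_le_inv_one_sub_pow {x : ℝ} (hx0 : 0 ≤ x) (hx1 : x < 1) (n : ℕ) :
    1 + n * x ≤ ((1 - x)⁻¹) ^ n := by
  have h : 1 + x ≤ (1 - x)⁻¹ := by
    rw [le_inv_comm₀ (by linarith) (by linarith), ← one_div, le_div_iff₀ (by linarith)]
    nlinarith
  calc 1 + n * x ≤ (1 + x) ^ n := one_add_mul_le_pow (by linarith) n
    _ ≤ ((1 - x)⁻¹) ^ n := pow_le_pow_left₀ (by linarith) h n

lemma sum_range_pow_mul_le_of_le (M k : ℕ) {x : ℝ} (hx0 : 0 ≤ x) (u : ℕ → ℝ) (hu_zero : u 0 = 1)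
    (hu_nonneg : ∀ ν, 0 ≤ u ν) (hu_le : ∀ ν, 1 ≤ ν → u ν ≤ x) :
    ∑ ν ∈ range (M + 1), ((ν : ℝ) + 1) ^ k * u ν ≤ 1 + ((M + 1) ^ (k + 1) : ℕ) * x := by
  rw [sum_range_succ', hu_zero]
  calc ∑ ν ∈ range M, (((ν + 1 : ℕ) : ℝ) + 1) ^ k * u (ν + 1) + ((0 : ℕ) + 1) ^ k * 1
      ≤ ∑ ν ∈ range M, ((M : ℝ) + 1) ^ k * x + 1 := by
        gcongr with ν hν
        · exact hu_nonneg _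
        · have := mem_range.1 hν
          exact_mod_cast (by omega : ν + 1 ≤ M)
        · exact hu_le _ (Nat.le_add_left 1 ν)
        · simp
    _ ≤ 1 + ((M + 1) ^ (k + 1) : ℕ) * x := by
        rw [sum_const, card_range, nsmul_eq_mul, pow_succ]
        push_cast
        nlinarith [pow_nonneg (by positivity : (0 : ℝ) ≤ M + 1) k]

lemma sum_Ico_pow_mul_le_of_decay {g : ℕ} (hg : 0 < g) (k : ℕ) {p : ℝ} (hp : 2 ≤ p)
    (u : ℕ → ℝ) (hu_decay : ∀ ν, 1 ≤ ν → u ν ≤ g * p ^ (-(ν / g : ℝ))) (m : ℕ) :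
    ∑ ν ∈ Ico (4 * g + 1) m, ((ν : ℝ) + 1) ^ k * u ν ≤ g * tailConst g k / p ^ 2 := by
  calc ∑ ν ∈ Ico (4 * g + 1) m, ((ν : ℝ) + 1) ^ k * u ν
      ≤ ∑ ν ∈ Ico (4 * g + 1) m, g / p ^ 2 * (((ν : ℝ) + 1) ^ k * decayRatio g ^ ν) := by
        refine sum_le_sum fun ν hν => ?_
        have hgν := (mem_Ico.1 hν).1
        calc ((ν : ℝ) + 1) ^ k * u ν ≤ ((ν : ℝ) + 1) ^ k * (g * (decayRatio g ^ ν / p ^ 2)) := by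
              gcongr
              exact (hu_decay ν (by omega)).trans
                (mul_le_mul_of_nonneg_left (rpow_neg_div_le hg (by omega) hp) (by positivity))
          _ = g / p ^ 2 * (((ν : ℝ) + 1) ^ k * decayRatio g ^ ν) := by ring
    _ ≤ g * tailConst g k / p ^ 2 := by
        rw [← mul_sum]
        exact (mul_le_mul_of_nonneg_left (sum_le_tailConst hg k _) (by positivity)).trans_eq
          (div_mul_eq_mul_div _ _ _)

lemma sum_range_pow_mul_le {g : ℕ} (hg : 0 < g) (k : ℕ) {p x : ℝ} (hp : 2 ≤ p) (hx0 : 0 ≤ x)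
    (hx1 : x < 1) (u : ℕ → ℝ) (hu_zero : u 0 = 1) (hu_nonneg : ∀ ν, 0 ≤ u ν)
    (hu_le : ∀ ν, 1 ≤ ν → u ν ≤ x) (hu_decay : ∀ ν, 1 ≤ ν → u ν ≤ g * p ^ (-(ν / g : ℝ)))
    (n : ℕ) :
    ∑ ν ∈ range n, ((ν : ℝ) + 1) ^ k * u ν ≤
      (1 + g * tailConst g k / p ^ 2) * ((1 - x)⁻¹) ^ ((4 * g + 1) ^ (k + 1)) := by
  set K := (4 * g + 1) ^ (k + 1)
  set c := g * tailConst g k / p ^ 2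
  have hc : 0 ≤ c := by have := tailConst_nonneg g k; positivity
  calc ∑ ν ∈ range n, ((ν : ℝ) + 1) ^ k * u ν
      ≤ ∑ ν ∈ range (4 * g + 1 + n), ((ν : ℝ) + 1) ^ k * u ν :=
        sum_le_sum_of_subset_of_nonneg (range_subset_range.2 (by omega)) fun ν _ _ =>
          mul_nonneg (by positivity) (hu_nonneg ν)
    _ ≤ 1 + (K : ℝ) * x + c := by
        rw [← sum_range_add_sum_Ico _ (by omega : 4 * g + 1 ≤ 4 * g + 1 + n)]
        exact add_le_add (sum_range_pow_mul_le_of_le (4 * g) k hx0 u hu_zero hu_nonneg hu_le)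
          (sum_Ico_pow_mul_le_of_decay hg k hp u hu_decay _)
    _ ≤ (1 + c) * ((1 - x)⁻¹) ^ K := by
        have hB := one_add_mul_le_inv_one_sub_pow hx0 hx1 K
        nlinarith [mul_nonneg hc (by positivity : (0 : ℝ) ≤ K * x)]

lemma taur_le_card_divisors_pow_pred (r : ℕ) {T : ℕ} (hT : T ≠ 0) :
    taur r T ≤ #T.divisors ^ (r - 1) := by
  cases r with
  | zero => exact (card_filter_le _ _).trans (by simp)
  | succ k =>
    have hprod : ∀ d ∈ (Fintype.piFinset fun _ : Fin (k + 1) => Icc 1 T).filter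
        (fun d => ∏ i, d i = T), (∏ i : Fin k, Fin.init d i) * d (Fin.last k) = T := fun d hd => by
      rw [← (mem_filter.1 hd).2, Fin.prod_univ_castSucc]
      rfl
    calc taur (k + 1) T ≤ #(Fintype.piFinset fun _ : Fin k => T.divisors) := by
          refine card_le_card_of_injOn Fin.init (fun d hd => ?_) fun d hd e he hde => ?_
          · refine Fintype.mem_piFinset.2 fun i => Nat.mem_divisors.2 ⟨?_, hT⟩
            rw [← hprod d hd]
            exact (dvd_prod_of_mem _ (mem_univ i)).mul_right _
          · have hinit : ∏ i, Fin.init d i ≠ 0 := fun h0 =>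
              hT (by simpa [h0] using (hprod d hd).symm)
            have hlast : d (Fin.last k) = e (Fin.last k) :=
              Nat.eq_of_mul_eq_mul_left (Nat.pos_of_ne_zero hinit)
                (by rw [hprod d hd, hde, hprod e he])
            rw [← Fin.snoc_init_self d, ← Fin.snoc_init_self e, hde, hlast]
      _ = #T.divisors ^ k := by simp [Fintype.card_piFinset]

lemma rho_div_lt_one {ρ : ℕ → ℝ} {p : ℕ} (hp : 0 < p) (hρp : ρ p ≤ p - 1) : ρ p / p < 1 := by
  rw [div_lt_one (by exact_mod_cast hp)]
  linarith

noncomputable def divisorMajorant (ρ : ℕ → ℝ) (k T : ℕ) : ℝ := ρ T * (#T.divisors : ℝ) ^ k / T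

lemma divisorMajorant_nonneg {ρ : ℕ → ℝ} (hρ0 : ∀ n, 0 ≤ ρ n) (k T : ℕ) :
    0 ≤ divisorMajorant ρ k T := by
  have := hρ0 T
  unfold divisorMajorant
  positivity

lemma divisorMajorant_mul {ρ : ℕ → ℝ} (hρ_mult : ∀ m n : ℕ, m.Coprime n → ρ (m * n) = ρ m * ρ n)
    (k : ℕ) {m n : ℕ} (hmn : m.Coprime n) :
    divisorMajorant ρ k (m * n) = divisorMajorant ρ k m * divisorMajorant ρ k n := by
  simp only [divisorMajorant, hρ_mult m n hmn, Nat.Coprime.card_divisors_mul hmn]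
  push_cast
  ring

lemma divisorMajorant_prime_pow (ρ : ℕ → ℝ) (k : ℕ) {p : ℕ} (hp : p.Prime) (ν : ℕ) :
    divisorMajorant ρ k (p ^ ν) = ((ν : ℝ) + 1) ^ k * (ρ (p ^ ν) / p ^ ν) := by
  simp only [divisorMajorant, ← ArithmeticFunction.sigma_zero_apply,
    ArithmeticFunction.sigma_zero_apply_prime_pow hp]
  push_cast
  ring

lemma taur_mul_div_le_divisorMajorant {ρ : ℕ → ℝ} (hρ0 : ∀ n, 0 ≤ ρ n) (r : ℕ) {T : ℕ}
    (hT : T ≠ 0) : ρ T * (taur r T : ℝ) / T ≤ divisorMajorant ρ (r - 1) T :=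
  div_le_div_of_nonneg_right (mul_le_mul_of_nonneg_left
    (by exact_mod_cast taur_le_card_divisors_pow_pred r hT) (hρ0 T)) T.cast_nonneg

lemma sum_range_divisorMajorant_prime_pow_le {g : ℕ} (hg : 0 < g) (k : ℕ) {ρ : ℕ → ℝ}
    (hρ0 : ∀ n, 0 ≤ ρ n) (hρ1 : ρ 1 = 1) {p : ℕ} (hp : p.Prime) (hρp : ρ p ≤ (p : ℝ) - 1)
    (hρpow : ∀ ν : ℕ, 1 ≤ ν →
      ρ (p ^ ν) ≤ min ((g : ℝ) * (p : ℝ) ^ ((ν : ℝ) - (ν : ℝ) / g)) ((p : ℝ) ^ (ν - 1) * ρ p))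
    (n : ℕ) :
    ∑ ν ∈ range n, divisorMajorant ρ k (p ^ ν) ≤
      (1 + g * tailConst g k / p ^ 2) * ((1 - ρ p / p)⁻¹) ^ ((4 * g + 1) ^ (k + 1)) := by
  have hp0 : (0 : ℝ) < p := Nat.cast_pos.2 hp.pos
  have hp2 : (2 : ℝ) ≤ p := by exact_mod_cast hp.two_le
  simp only [divisorMajorant_prime_pow ρ k hp]
  refine sum_range_pow_mul_le hg k hp2 (div_nonneg (hρ0 p) hp0.le) (rho_div_lt_one hp.pos hρp)
    (fun ν => ρ (p ^ ν) / p ^ ν) (by simp [hρ1]) (fun ν => div_nonneg (hρ0 _) (by positivity))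
    (fun ν hν => ?_) (fun ν hν => ?_) n
  · have h := (hρpow ν hν).trans (min_le_right _ _)
    rw [div_le_div_iff₀ (by positivity) hp0, ← pow_sub_one_mul (by omega : ν ≠ 0) (p : ℝ)]
    nlinarith
  · rw [div_le_iff₀ (by positivity), mul_assoc, ← Real.rpow_natCast, ← Real.rpow_add hp0,
      neg_add_eq_sub]
    exact (hρpow ν hν).trans (min_le_left _ _)

lemma prod_one_add_div_sq_le_exp {c : ℝ} (hc : 0 ≤ c) (P : Finset ℕ) :
    ∏ p ∈ P, (1 + c / (p : ℝ) ^ 2) ≤ Real.exp (c * (Real.pi ^ 2 / 6)) := by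
  calc ∏ p ∈ P, (1 + c / (p : ℝ) ^ 2)
      ≤ ∏ p ∈ P, Real.exp (c / (p : ℝ) ^ 2) :=
        prod_le_prod (fun p _ => by positivity) fun p _ => by
          linarith [Real.add_one_le_exp (c / (p : ℝ) ^ 2)]
    _ = Real.exp (c * ∑ p ∈ P, 1 / (p : ℝ) ^ 2) := by
        rw [← Real.exp_sum, mul_sum]
        simp only [mul_one_div]
    _ ≤ Real.exp (c * (Real.pi ^ 2 / 6)) := by
        gcongr
        rw [← hasSum_zeta_two.tsum_eq]
        exact hasSum_zeta_two.summable.sum_le_tsum P fun n _ => by positivity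

lemma div_phiRho_eq_prod (ρ : ℕ → ℝ) {N : ℕ} (hN : N ≠ 0) :
    N / phiRho ρ N = ∏ p ∈ N.primeFactors, (1 - ρ p / p)⁻¹ := by
  rw [phiRho, prod_inv_distrib, div_mul_eq_div_div, div_self (Nat.cast_ne_zero.2 hN), one_div]

/-- The sum over all `T` with `rad T ∣ N` has nonnegative terms, so it is bounded through its
finite partial sums. -/
theorem statement9_general (r g : ℕ) (hg : 1 ≤ g) :
    ∃ K C : ℝ, 0 < K ∧ 0 < C ∧
      ∀ ρ : ℕ → ℝ,
        (∀ n, 0 ≤ ρ n) → ρ 1 = 1 →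
        (∀ m n : ℕ, Nat.Coprime m n → ρ (m * n) = ρ m * ρ n) →
        (∀ p : ℕ, p.Prime → ρ p ≤ (p : ℝ) - 1) →
        (∀ p : ℕ, p.Prime → ∀ ν : ℕ, 1 ≤ ν →
          ρ (p ^ ν) ≤
            min ((g : ℝ) * (p : ℝ) ^ ((ν : ℝ) - (ν : ℝ) / g)) ((p : ℝ) ^ (ν - 1) * ρ p)) →
        ∀ N : ℕ, 0 < N →
          ∀ S : Finset ℕ, (∀ T ∈ S, 0 < T ∧ ∀ p : ℕ, p.Prime → p ∣ T → p ∣ N) →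
            ∑ T ∈ S, ρ T * (taur r T : ℝ) / T ≤ C * ((N : ℝ) / phiRho ρ N) ^ K := by
  set k := r - 1
  refine ⟨((4 * g + 1) ^ (k + 1) : ℕ), Real.exp (g * tailConst g k * (Real.pi ^ 2 / 6)),
    by positivity, Real.exp_pos _, ?_⟩
  intro ρ hρ0 hρ1 hρ_mult hρp hρpow N hN S hS
  have hS' : ∀ T ∈ S, T ≠ 0 ∧ T.primeFactors ⊆ N.primeFactors := fun T hT =>
    ⟨(hS T hT).1.ne', fun p hp => Nat.mem_primeFactors.2 ⟨Nat.prime_of_mem_primeFactors hp,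
      (hS T hT).2 p (Nat.prime_of_mem_primeFactors hp) (Nat.dvd_of_mem_primeFactors hp), hN.ne'⟩⟩
  obtain ⟨len, hlen⟩ := exists_sum_le_prod_primeFactors_sum_range (divisorMajorant ρ k)
    (divisorMajorant_nonneg hρ0 k) (fun m n => divisorMajorant_mul hρ_mult k)
    (by simp [divisorMajorant, hρ1]) hN.ne' S hS'
  have hx : ∀ p ∈ N.primeFactors, 0 ≤ (1 - ρ p / p)⁻¹ := fun p hp => by
    have hp := Nat.prime_of_mem_primeFactors hp
    exact inv_nonneg.2 (sub_nonneg.2 (rho_div_lt_one hp.pos (hρp p hp)).le)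
  rw [div_phiRho_eq_prod ρ hN.ne', Real.rpow_natCast]
  calc ∑ T ∈ S, ρ T * (taur r T : ℝ) / T ≤ ∑ T ∈ S, divisorMajorant ρ k T :=
        sum_le_sum fun T hT => taur_mul_div_le_divisorMajorant hρ0 r (hS' T hT).1
    _ ≤ ∏ p ∈ N.primeFactors, ∑ i ∈ range (len p), divisorMajorant ρ k (p ^ i) := hlen
    _ ≤ ∏ p ∈ N.primeFactors, ((1 + g * tailConst g k / p ^ 2) *
          ((1 - ρ p / p)⁻¹) ^ ((4 * g + 1) ^ (k + 1))) := by
        refine prod_le_prod (fun p _ => sum_nonneg fun i _ => divisorMajorant_nonneg hρ0 k _)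
          fun p hp => ?_
        have hp := Nat.prime_of_mem_primeFactors hp
        exact sum_range_divisorMajorant_prime_pow_le hg k hρ0 hρ1 hp (hρp p hp) (hρpow p hp) _
    _ ≤ Real.exp (g * tailConst g k * (Real.pi ^ 2 / 6)) *
          (∏ p ∈ N.primeFactors, (1 - ρ p / p)⁻¹) ^ ((4 * g + 1) ^ (k + 1)) := by
        rw [prod_mul_distrib, prod_pow]
        exact mul_le_mul_of_nonneg_right
          (prod_one_add_div_sq_le_exp (by have := tailConst_nonneg g k; positivity) _)
          (pow_nonneg (prod_nonneg hx) _)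

/-- Fix integers `r, g ≥ 1`. There exist `K, C > 0` depending only on `r, g` such that for
every nonnegative multiplicative `ρ` with `ρ(p) ≤ p − 1` and
`ρ(pᵛ) ≤ min(g·p^{ν − ν/g}, p^{ν−1}·ρ(p))` for all primes `p` and `ν ≥ 1`, and every `N ≥ 1`,
`∑_{T ≥ 1, rad T ∣ N} ρ(T)·τ_r(T)/T ≤ C · (N/φ_ρ(N))^K`. Since all terms are nonnegative, the
(possibly infinite) sum is bounded by bounding all its finite partial sums. -/
theorem statement9 (r g : ℕ) (hr : 1 ≤ r) (hg : 1 ≤ g) :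
    ∃ K C : ℝ, 0 < K ∧ 0 < C ∧
      ∀ ρ : ℕ → ℝ,
        (∀ n, 0 ≤ ρ n) → ρ 1 = 1 →
        (∀ m n : ℕ, Nat.Coprime m n → ρ (m * n) = ρ m * ρ n) →
        (∀ p : ℕ, p.Prime → ρ p ≤ (p : ℝ) - 1) →
        (∀ p : ℕ, p.Prime → ∀ ν : ℕ, 1 ≤ ν →
          ρ (p ^ ν) ≤
            min ((g : ℝ) * (p : ℝ) ^ ((ν : ℝ) - (ν : ℝ) / g)) ((p : ℝ) ^ (ν - 1) * ρ p)) →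
        ∀ N : ℕ, 0 < N →
          ∀ S : Finset ℕ, (∀ T ∈ S, 0 < T ∧ ∀ p : ℕ, p.Prime → p ∣ T → p ∣ N) →
            ∑ T ∈ S, ρ T * (taur r T : ℝ) / T ≤ C * ((N : ℝ) / phiRho ρ N) ^ K :=
  statement9_general r g hg
end

section
/- Fix integers r, g ≥ 1 and reals 0 < ε, δ < 1. There exist constants c₀, C > 0 depending only on r, g, ε, δ such that the following holds. Let Q₁, …, Q_r ∈ ℤ[X] be irreducible polynomials, pairwise coprime, such that Q := ∏_{j=1}^r Q_j has degree g and no fixed prime divisor. Then for all x ≥ c₀·‖Q‖^δ and x^ε < y ≤ x, Σ_{p ≤ x^{ε/(6g)}} #{n ∈ ℤ : x < n ≤ x + y, Q(n) ≠ 0, and p^{v_p(Q(n))} > x^{ε/3}} ≤ C·y/x^{ε/(6g)}, where the outer sum is over primes p and v_p denotes the p-adic valuation. -/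
/-!
For a prime `p ≤ P := x ^ (ε / (6g))` choose `e` with `p ^ e ≤ P ^ 2 < p ^ (e + 1)`. Every `n`
counted for `p` satisfies `p ^ (g e + 1) ∣ Q(n)`. Since `Q` has degree `g` and, having no fixed
prime divisor, is nonzero mod `p`, such `n` lie in at most `g` classes modulo `p ^ (e + 1)`: for
`g + 1` of them, pairwise incongruent, peeling off the linear factors `X - nᵢ` one at a time loses
at most `e` powers of `p` each time and would force `g e + 1 ≤ g e`. Each class meets `(x, x + y]` in at
most `(y + 1) / P ^ 2 + 1` integers, and there are at most `P` primes, so the sum is at most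
`g ((y + 1) / P + P) ≤ 3 g y / P` because `P ^ 2 ≤ y`.
-/

open scoped Classical

noncomputable def primesBelow (x : ℝ) : Finset ℕ :=
  (Finset.range (⌊x⌋₊ + 1)).filter Nat.Prime

/-- `ρ_Q(m) := #{0 ≤ n < m : m ∣ Q(n)}`. -/
noncomputable def rho (Q : Polynomial ℤ) (m : ℕ) : ℕ :=
  ((Finset.range m).filter fun n => (m : ℤ) ∣ Q.eval (n : ℤ)).card

/-- `‖Q‖` is the maximum of the absolute values of the coefficients of `Q`. -/
noncomputable def polyNorm (Q : Polynomial ℤ) : ℝ :=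
  ((Q.support.sup fun i => (Q.coeff i).natAbs : ℕ) : ℝ)

open Polynomial Finset

theorem pow_sub_dvd_of_pow_dvd_mul {p : ℕ} [Fact p.Prime] {a b : ℤ} {k e : ℕ}
    (h : (p : ℤ) ^ k ∣ a * b) (ha : ¬ (p : ℤ) ^ (e + 1) ∣ a) : (p : ℤ) ^ (k - e) ∣ b := by
  rcases eq_or_ne b 0 with rfl | hb
  · exact dvd_zero _
  have ha0 : a ≠ 0 := by rintro rfl; exact ha (dvd_zero _)
  have hva : padicValInt p a ≤ e := by
    by_contra! hlt
    exact ha ((padicValInt_dvd_iff _ a).2 (Or.inr hlt))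
  have hk : k ≤ padicValInt p a + padicValInt p b := by
    rw [← padicValInt.mul ha0 hb]
    exact ((padicValInt_dvd_iff k _).1 h).resolve_left (mul_ne_zero ha0 hb)
  exact (padicValInt_dvd_iff _ b).2 (Or.inr (by omega))

/-- Writing `Q = Q(n₀) + (X - n₀) R`, the factor `nᵢ - n₀` absorbs at most `e` powers of `p`,
and `R` is again nonzero mod `p`, of degree one less. -/
theorem le_mul_of_pow_dvd_eval {p : ℕ} [Fact p.Prime] (e d : ℕ) (Q : ℤ[X])
    (hdeg : Q.natDegree ≤ d) (hQp : ¬ C (p : ℤ) ∣ Q) (k : ℕ) (n : Fin (d + 1) → ℤ)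
    (hdvd : ∀ i, (p : ℤ) ^ k ∣ Q.eval (n i))
    (hsep : Pairwise fun i j => ¬ (p : ℤ) ^ (e + 1) ∣ n i - n j) : k ≤ d * e := by
  induction d generalizing Q k with
  | zero =>
    by_contra! hk
    rw [eq_C_of_natDegree_le_zero hdeg] at hQp hdvd
    exact hQp (map_dvd C ((dvd_pow_self _ (show k ≠ 0 by omega)).trans (by simpa using hdvd 0)))
  | succ d ih =>
    rcases Nat.eq_zero_or_pos k with rfl | hk
    · exact Nat.zero_le _
    set R := Q /ₘ (X - C (n 0))
    have hQR : Q = C (Q.eval (n 0)) + (X - C (n 0)) * R := by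
      rw [← modByMonic_X_sub_C_eq_C_eval, modByMonic_add_div]
    have hRp : ¬ C (p : ℤ) ∣ R := by
      refine fun hR => hQp ?_
      rw [hQR]
      exact dvd_add (map_dvd C ((dvd_pow_self _ hk.ne').trans (hdvd 0))) (hR.mul_left _)
    have hRdeg : R.natDegree ≤ d := by
      rw [natDegree_divByMonic _ (monic_X_sub_C _), natDegree_X_sub_C]
      omega
    have hRdvd (i : Fin (d + 1)) : (p : ℤ) ^ (k - e) ∣ R.eval (n i.succ) := by
      have hdiff : Q.eval (n i.succ) - Q.eval (n 0) = (n i.succ - n 0) * R.eval (n i.succ) := by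
        conv_lhs => rw [hQR]
        simp
      exact pow_sub_dvd_of_pow_dvd_mul (hdiff ▸ dvd_sub (hdvd _) (hdvd 0))
        (hsep (Fin.succ_ne_zero i))
    have := ih R hRdeg hRp (k - e) (fun i => n i.succ) hRdvd
      fun i j hij => hsep (Fin.succ_injective _ |>.ne hij)
    rw [Nat.succ_mul]
    omega

theorem card_image_emod_le {p : ℕ} [Fact p.Prime] {Q : ℤ[X]} {g e : ℕ} (hdeg : Q.natDegree ≤ g)
    (hQp : ¬ C (p : ℤ) ∣ Q) {T : Finset ℤ} (hT : ∀ n ∈ T, (p : ℤ) ^ (g * e + 1) ∣ Q.eval n) :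
    #(T.image (· % (p : ℤ) ^ (e + 1))) ≤ g := by
  set M := (p : ℤ) ^ (e + 1)
  by_contra! hcard
  set I := T.image (· % M)
  choose! s hsT hsM using fun r (hr : r ∈ I) => Finset.mem_image.1 hr
  let f := I.orderEmbOfCardLe hcard
  have hsep : Pairwise (fun i j => ¬ M ∣ s (f i) - s (f j)) := by
    intro i j hij hdvd
    have hmod : s (f j) % M = s (f i) % M := Int.ModEq.eq ((Int.modEq_iff_dvd).2 hdvd)
    rw [hsM _ (I.orderEmbOfCardLe_mem hcard j), hsM _ (I.orderEmbOfCardLe_mem hcard i)] at hmod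
    exact hij (f.injective hmod.symm)
  have := le_mul_of_pow_dvd_eval e g Q hdeg hQp _ (fun i => s (f i))
    (fun i => hT _ (hsT _ (I.orderEmbOfCardLe_mem hcard i))) hsep
  omega

theorem not_C_dvd_of_rho_lt {Q : ℤ[X]} {p : ℕ} (h : rho Q p < p) : ¬ C (p : ℤ) ∣ Q := by
  intro hQ
  have hall (n : ℤ) : (p : ℤ) ∣ Q.eval n := by simpa using eval_dvd (x := n) hQ
  rw [rho, filter_true_of_mem fun n _ => hall n] at h
  simp [card_image_of_injective _ Nat.cast_injective] at h

theorem one_le_polyNorm {Q : ℤ[X]} (hQ : Q ≠ 0) : 1 ≤ polyNorm Q := by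
  have hmem := natDegree_mem_support_of_nonzero hQ
  have hlead : 1 ≤ (Q.coeff Q.natDegree).natAbs := Int.natAbs_pos.2 (mem_support_iff.1 hmem)
  rw [polyNorm]
  exact_mod_cast hlead.trans (le_sup (f := fun i => (Q.coeff i).natAbs) hmem)

theorem card_primesBelow_le {P : ℝ} (hP : 0 ≤ P) : (#(primesBelow P) : ℝ) ≤ P := by
  have hsub : primesBelow P ⊆ (range (⌊P⌋₊ + 1)).erase 0 := fun q hq => by
    obtain ⟨hq, hprime⟩ := mem_filter.1 hq
    exact mem_erase.2 ⟨hprime.ne_zero, hq⟩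
  have hcard := card_le_card hsub
  rw [card_erase_of_mem (by simp), card_range, Nat.add_sub_cancel] at hcard
  exact (Nat.cast_le.2 hcard).trans (Nat.floor_le hP)

theorem card_Ioc_filter_modEq_le {a b M : ℤ} (hM : 0 < M) (hab : a ≤ b) (v : ℤ) :
    (#{n ∈ Ioc a b | n ≡ v [ZMOD M]} : ℝ) ≤ (b - a) / M + 1 := by
  have hcard := Int.Ioc_filter_modEq_card a b hM v
  have hq : ((⌊(b - v) / (M : ℚ)⌋ - ⌊(a - v) / (M : ℚ)⌋ : ℤ) : ℚ) ≤ (b - a) / M + 1 := by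
    have h1 := Int.floor_le ((b - v) / (M : ℚ))
    have h2 := Int.lt_floor_add_one ((a - v) / (M : ℚ))
    push_cast
    have : ((b : ℚ) - a) / M = (b - v) / M - (a - v) / M := by ring
    linarith
  have hnonneg : (0 : ℚ) ≤ (b - a) / M + 1 := by
    have : (0 : ℚ) ≤ b - a := by exact_mod_cast sub_nonneg.2 hab
    positivity
  have hz : ((#{n ∈ Ioc a b | n ≡ v [ZMOD M]} : ℤ) : ℚ) ≤ (b - a) / M + 1 := by
    rw [hcard]
    push_cast
    exact max_le (by exact_mod_cast hq) hnonneg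
  exact_mod_cast hz

theorem card_le_card_image_emod_mul {a b M : ℤ} (hM : 0 < M) (hab : a ≤ b) {T : Finset ℤ}
    (hT : T ⊆ Ioc a b) : (#T : ℝ) ≤ #(T.image (· % M)) * ((b - a) / M + 1) := by
  rw [card_eq_sum_card_fiberwise fun n hn => mem_image_of_mem (· % M) hn, Nat.cast_sum,
    ← nsmul_eq_mul]
  refine sum_le_card_nsmul _ _ _ fun r hr => ?_
  obtain ⟨m, -, rfl⟩ := mem_image.1 hr
  refine le_trans (Nat.cast_le.2 (card_le_card fun n hn => ?_))
    (card_Ioc_filter_modEq_le hM hab (m % M))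
  obtain ⟨hnT, hnm⟩ := mem_filter.1 hn
  exact mem_filter.2 ⟨hT hnT, by rw [Int.ModEq, hnm, Int.emod_emod]⟩

/-- With `p ^ e ≤ X < p ^ (e + 1)`, every counted `n` has `p ^ (g e + 1) ∣ Q(n)`, so the counted
`n` fall into at most `g` residue classes modulo `p ^ (e + 1)`. -/
theorem ncard_pow_padicValInt_gt_le {Q : ℤ[X]} {g : ℕ} (hdeg : Q.natDegree ≤ g) {p : ℕ}
    [Fact p.Prime] (hQp : ¬ C (p : ℤ) ∣ Q) {X : ℝ} (hX : 1 ≤ X) (x : ℝ) {y : ℝ} (hy : 0 ≤ y) :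
    ({n : ℤ | x < n ∧ n ≤ x + y ∧ Q.eval n ≠ 0 ∧
        X ^ g < (p : ℝ) ^ padicValInt p (Q.eval n)}.ncard : ℝ) ≤ g * ((y + 1) / X + 1) := by
  have hp : 1 < p := (Fact.out : p.Prime).one_lt
  have hpR : (1 : ℝ) < p := by exact_mod_cast hp
  set e := Nat.log p ⌊X⌋₊
  have hpe : (p : ℝ) ^ e ≤ X := by
    refine le_trans ?_ (Nat.floor_le (by linarith))
    exact_mod_cast Nat.pow_log_le_self p (Nat.floor_pos.2 hX).ne'
  have hXp : X < (p : ℝ) ^ (e + 1) := by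
    refine (Nat.lt_floor_add_one X).trans_le ?_
    exact_mod_cast Nat.lt_pow_succ_log_self hp ⌊X⌋₊
  set T := (Ioc ⌊x⌋ ⌊x + y⌋).filter fun n => (p : ℤ) ^ (g * e + 1) ∣ Q.eval n
  have hsub : {n : ℤ | x < n ∧ n ≤ x + y ∧ Q.eval n ≠ 0 ∧
      X ^ g < (p : ℝ) ^ padicValInt p (Q.eval n)} ⊆ T := by
    rintro n ⟨hxn, hny, -, hval⟩
    refine mem_filter.2 ⟨mem_Ioc.2 ⟨Int.floor_lt.2 hxn, Int.le_floor.2 hny⟩, ?_⟩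
    have hlt : g * e < padicValInt p (Q.eval n) := by
      refine (pow_lt_pow_iff_right₀ hpR).1 (lt_of_le_of_lt ?_ hval)
      rw [mul_comm, pow_mul]
      exact pow_le_pow_left₀ (by positivity) hpe g
    exact (pow_dvd_pow _ hlt).trans (padicValInt_dvd _)
  have hM : (0 : ℤ) < (p : ℤ) ^ (e + 1) := by positivity
  have hab : ⌊x⌋ ≤ ⌊x + y⌋ := Int.floor_mono (by linarith)
  have hlen : (⌊x + y⌋ - ⌊x⌋ : ℝ) ≤ y + 1 := by
    linarith [Int.floor_le (x + y), Int.lt_floor_add_one x]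
  calc ({n : ℤ | x < n ∧ n ≤ x + y ∧ Q.eval n ≠ 0 ∧
        X ^ g < (p : ℝ) ^ padicValInt p (Q.eval n)}.ncard : ℝ)
      ≤ #T := by exact_mod_cast (Set.ncard_le_ncard hsub).trans (Set.ncard_coe_finset T).le
    _ ≤ #(T.image (· % (p : ℤ) ^ (e + 1))) *
          ((⌊x + y⌋ - ⌊x⌋ : ℝ) / (((p : ℤ) ^ (e + 1) : ℤ) : ℝ) + 1) :=
      card_le_card_image_emod_mul hM hab (filter_subset _ _)
    _ ≤ g * ((y + 1) / X + 1) := by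
      have hres : (#(T.image (· % (p : ℤ) ^ (e + 1))) : ℝ) ≤ g := by
        exact_mod_cast card_image_emod_le hdeg hQp fun n hn => (mem_filter.1 hn).2
      have hMX : X ≤ (((p : ℤ) ^ (e + 1) : ℤ) : ℝ) := by push_cast; exact hXp.le
      have hlen0 : (0 : ℝ) ≤ ⌊x + y⌋ - ⌊x⌋ := sub_nonneg.2 (by exact_mod_cast hab)
      gcongr

theorem statement12_general (r g : ℕ) (ε δ : ℝ) (hg : 1 ≤ g)
    (hε : 0 < ε) (hδ : 0 < δ) :
    ∃ c₀ C : ℝ, 0 < c₀ ∧ 0 < C ∧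
      ∀ Qs : Fin r → Polynomial ℤ,
        (∀ j, Irreducible (Qs j)) →
        (∀ i j, i ≠ j → IsRelPrime (Qs i) (Qs j)) →
        (∏ j, Qs j).natDegree = g →
        (∀ p : ℕ, p.Prime → rho (∏ j, Qs j) p < p) →
        ∀ x y : ℝ, c₀ * polyNorm (∏ j, Qs j) ^ δ ≤ x → x ^ ε < y → y ≤ x →
          ∑ p ∈ primesBelow (x ^ (ε / (6 * g))),
            (({n : ℤ | x < (n : ℝ) ∧ (n : ℝ) ≤ x + y ∧ (∏ j, Qs j).eval n ≠ 0 ∧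
                x ^ (ε / 3) < ((p : ℝ) ^ padicValInt p ((∏ j, Qs j).eval n))}).ncard : ℝ) ≤
            C * y / x ^ (ε / (6 * g)) := by
  refine ⟨1, 3 * g, one_pos, by positivity, fun Qs _ _ hdeg hrho x y hx hxy _ => ?_⟩
  set Q := ∏ j, Qs j
  have hQ : Q ≠ 0 := ne_zero_of_natDegree_gt (n := 0) (by omega)
  have hx1 : 1 ≤ x := by
    simpa using (Real.one_le_rpow (one_le_polyNorm hQ) hδ.le).trans (by simpa using hx)
  have hy1 : 1 ≤ y := (Real.one_le_rpow hx1 hε.le).trans hxy.le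
  set P := x ^ (ε / (6 * g))
  have hP1 : 1 ≤ P := Real.one_le_rpow hx1 (by positivity)
  have hPsq : P ^ 2 = x ^ (ε / (3 * g)) := by
    rw [← Real.rpow_natCast, ← Real.rpow_mul (by linarith)]
    congr 1
    field_simp
    norm_num
  have hthr : x ^ (ε / 3) = (P ^ 2) ^ g := by
    rw [hPsq, ← Real.rpow_mul_natCast (by linarith)]
    congr 1
    field_simp
  have hPy : P ^ 2 ≤ y := by
    refine le_trans ?_ hxy.le
    rw [hPsq]
    refine Real.rpow_le_rpow_of_exponent_le hx1 ?_
    have : (1 : ℝ) ≤ g := by exact_mod_cast hg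
    rw [div_le_iff₀ (by positivity)]
    nlinarith
  rw [hthr]
  calc _ ≤ #(primesBelow P) • (g * ((y + 1) / P ^ 2 + 1)) := by
        refine sum_le_card_nsmul _ _ _ fun p hp => ?_
        have hprime := (mem_filter.1 hp).2
        have := Fact.mk hprime
        exact ncard_pow_padicValInt_gt_le hdeg.le (not_C_dvd_of_rho_lt (hrho p hprime))
          (one_le_pow₀ hP1) x (by linarith)
    _ ≤ P * (g * ((y + 1) / P ^ 2 + 1)) := by
        rw [nsmul_eq_mul]
        gcongr
        exact card_primesBelow_le (by linarith)
    _ = g * (y + 1 + P ^ 2) / P := by field_simp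
    _ ≤ g * (3 * y) / P := by
        gcongr
        nlinarith
    _ = 3 * g * y / P := by ring

/-- Fix `r, g ≥ 1` and `0 < ε, δ < 1`. There are constants `c₀, C > 0` depending only on
`r, g, ε, δ` such that for all irreducible pairwise coprime `Q₁, …, Q_r ∈ ℤ[X]` whose product
`Q` has degree `g` and no fixed prime divisor, and all `x ≥ c₀‖Q‖^δ` and `x^ε < y ≤ x`,
`∑_{p ≤ x^{ε/(6g)}} #{x < n ≤ x + y : Q(n) ≠ 0, p^{v_p(Q(n))} > x^{ε/3}} ≤ C·y/x^{ε/(6g)}`. -/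
theorem statement12 (r g : ℕ) (ε δ : ℝ) (hr : 1 ≤ r) (hg : 1 ≤ g)
    (hε : 0 < ε) (hε1 : ε < 1) (hδ : 0 < δ) (hδ1 : δ < 1) :
    ∃ c₀ C : ℝ, 0 < c₀ ∧ 0 < C ∧
      ∀ Qs : Fin r → Polynomial ℤ,
        (∀ j, Irreducible (Qs j)) →
        (∀ i j, i ≠ j → IsRelPrime (Qs i) (Qs j)) →
        (∏ j, Qs j).natDegree = g →
        (∀ p : ℕ, p.Prime → rho (∏ j, Qs j) p < p) →
        ∀ x y : ℝ, c₀ * polyNorm (∏ j, Qs j) ^ δ ≤ x → x ^ ε < y → y ≤ x →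
          ∑ p ∈ primesBelow (x ^ (ε / (6 * g))),
            (({n : ℤ | x < (n : ℝ) ∧ (n : ℝ) ≤ x + y ∧ (∏ j, Qs j).eval n ≠ 0 ∧
                x ^ (ε / 3) < ((p : ℝ) ^ padicValInt p ((∏ j, Qs j).eval n))}).ncard : ℝ) ≤
            C * y / x ^ (ε / (6 * g)) :=
  statement12_general r g ε δ hg hε hδ
end
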